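/- Let G be a group, u : G → ℝ a homomorphism, g ∈ G with u(g) < 0, and L > 0. Write λ ≡_L μ when T_L(λ - μ) = 0. Then for λ, μ ∈ Λ: λ ≡_L (1 + g + g² + ⋯)·μ holds if and only if (1 - g)·λ ≡_L μ holds, provided every element of the supports of λ, μ has u-value at most 0. -/

import Mathlib

/-- The Novikov condition. -/
def NovCond {G : Type*} [Group G] (u : G → ℝ) (f : G → ℤ) : Prop :=
  ∀ L : ℝ, {h : G | f h ≠ 0 ∧ L < u h}.Finite

/-- The convolution product of two formal series. -/
noncomputable def conv {G : Type*} [Group G] (f g : G → ℤ) : G → ℤ :=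
  fun h => ∑ᶠ p : G, f p * g (p⁻¹ * h)

open Classical in
/-- The Dirac series concentrated at an element `a`. -/
noncomputable def delta {G : Type*} [Group G] (a : G) : G → ℤ :=
  fun h => if h = a then 1 else 0

open Classical in
/-- The geometric series `1 + g + g² + g³ + ⋯`. -/
noncomputable def geom {G : Type*} [Group G] (g : G) : G → ℤ :=
  fun h => if ∃ j : ℕ, h = g ^ j then 1 else 0

open Classical in
/-- The `L`-truncation. -/
noncomputable def trunc {G : Type*} [Group G] (u : G → ℝ) (L : ℝ) (f : G → ℤ) : G → ℤ :=
  fun h => if -L < u h then f h else 0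

/-!
Fix `h` with `u h > -L`. Along the orbit `hₖ = g⁻ᵏ h` the value `u hₖ = u h - k u g` increases,
so the whole orbit stays in the window `u > -L`, and `λ`, `μ` vanish on `hₖ` for large `k`
since they are supported in `u ≤ 0`. On the orbit, `(1 + g + g² + ⋯)·μ` and `(1 - g)·λ` read
`μₖ + μₖ₊₁ + ⋯` and `λₖ - λₖ₊₁`, and for eventually vanishing sequences `λₖ = μₖ + μₖ₊₁ + ⋯`
for all `k` is equivalent to `λₖ - λₖ₊₁ = μₖ` for all `k`.
-/

open Finset

theorem eq_sum_range_add_iff_sub_succ_eq {M : Type*} [AddCommGroup M] {x y : ℕ → M} {N : ℕ}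
    (hx : ∀ n ≥ N, x n = 0) (hy : ∀ n ≥ N, y n = 0) :
    (∀ k, x k = ∑ i ∈ range N, y (k + i)) ↔ ∀ k, x k - x (k + 1) = y k := by
  constructor
  · intro H k
    have hshift : ∑ i ∈ range N, y (k + i) = y k + ∑ i ∈ range N, y (k + 1 + i) := by
      rw [← add_zero (∑ i ∈ range N, y (k + i)), ← hy (k + N) (Nat.le_add_left N k),
        ← sum_range_succ, sum_range_succ', add_comm]
      simp only [add_zero, add_assoc, add_comm 1]
    rw [H, H, hshift, add_sub_cancel_right]
  · intro H k
    have htelescope : ∀ n, x k = ∑ i ∈ range n, y (k + i) + x (k + n) := by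
      intro n
      induction n with
      | zero => simp
      | succ n ih => rw [ih, sum_range_succ, ← H, ← add_assoc k n 1]; abel
    rw [htelescope N, hx (k + N) (Nat.le_add_left N k), add_zero]

theorem trunc_eq_zero_iff {G : Type*} [Group G] {u : G → ℝ} {L : ℝ} {f : G → ℤ} :
    trunc u L f = 0 ↔ ∀ h, -L < u h → f h = 0 := by
  simp only [funext_iff, trunc, Pi.zero_apply, ite_eq_right_iff]

theorem conv_delta_one_sub_delta_apply {G : Type*} [Group G] {g : G} (hg : g ≠ 1)
    (f : G → ℤ) (h : G) :
    conv (delta 1 - delta g) f h = f h - f (g⁻¹ * h) := by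
  classical
  have hsupp : Function.support (fun p => (delta 1 - delta g : G → ℤ) p * f (p⁻¹ * h)) ⊆
      ↑({1, g} : Finset G) := by
    intro p hp
    by_contra hp'
    simp only [coe_insert, coe_singleton, Set.mem_insert_iff, Set.mem_singleton_iff,
      not_or] at hp'
    simp [delta, hp'.1, hp'.2] at hp
  rw [conv, finsum_eq_sum_of_support_subset _ hsupp, sum_pair hg.symm]
  simp [delta, hg, hg.symm, sub_eq_add_neg]

theorem conv_geom_apply_eq_sum_range {G : Type*} [Group G] {g : G} (hg : ¬IsOfFinOrder g)
    {f : G → ℤ} {h : G} {N : ℕ} (hf : ∀ n ≥ N, f (g⁻¹ ^ n * h) = 0) :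
    conv (geom g) f h = ∑ n ∈ range N, f (g⁻¹ ^ n * h) := by
  classical
  have hsupp : Function.support (fun p => geom g p * f (p⁻¹ * h)) ⊆ (range N).image (g ^ ·) := by
    intro p hp
    obtain ⟨n, rfl⟩ : ∃ n : ℕ, p = g ^ n := by
      by_contra hn
      simp [geom, hn] at hp
    have hn : n < N := by
      by_contra hn
      rw [Function.mem_support, ← inv_pow, hf n (not_lt.1 hn), mul_zero] at hp
      exact hp rfl
    simpa using ⟨n, hn, rfl⟩
  rw [conv, finsum_eq_sum_of_support_subset _ hsupp,
    sum_image fun i _ j _ hij => injective_pow_iff_not_isOfFinOrder.2 hg hij]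
  refine sum_congr rfl fun n _ => ?_
  simp [geom, inv_pow]

theorem eq_conv_geom_on_orbit_iff {G : Type*} [Group G] {g : G} (hg : ¬IsOfFinOrder g)
    {lam mu : G → ℤ} {h : G} {N : ℕ}
    (hlam : ∀ n ≥ N, lam (g⁻¹ ^ n * h) = 0) (hmu : ∀ n ≥ N, mu (g⁻¹ ^ n * h) = 0) :
    (∀ k : ℕ, lam (g⁻¹ ^ k * h) = conv (geom g) mu (g⁻¹ ^ k * h)) ↔
      ∀ k : ℕ, conv (delta 1 - delta g) lam (g⁻¹ ^ k * h) = mu (g⁻¹ ^ k * h) := by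
  have horbit : ∀ i k : ℕ, g⁻¹ ^ i * (g⁻¹ ^ k * h) = g⁻¹ ^ (k + i) * h := fun i k => by
    rw [← mul_assoc, ← pow_add, add_comm]
  have hg1 : g ≠ 1 := fun h1 => hg (h1 ▸ IsOfFinOrder.one)
  have hconv : ∀ k : ℕ, conv (geom g) mu (g⁻¹ ^ k * h) = ∑ i ∈ range N, mu (g⁻¹ ^ (k + i) * h) :=
    fun k => by
      rw [conv_geom_apply_eq_sum_range (N := N) hg fun n hn => by
        rw [horbit n k]; exact hmu (k + n) (by omega)]
      simp only [horbit]
  have hsucc : ∀ k : ℕ, g⁻¹ * (g⁻¹ ^ k * h) = g⁻¹ ^ (k + 1) * h := fun k => by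
    rw [← mul_assoc, ← pow_succ']
  simp only [hconv, conv_delta_one_sub_delta_apply hg1, hsucc]
  exact eq_sum_range_add_iff_sub_succ_eq hlam hmu

theorem forall_iff_forall_inv_pow_mul {G : Type*} [Group G] {g : G} {W P : G → Prop}
    (hW : ∀ h, W h → ∀ k : ℕ, W (g⁻¹ ^ k * h)) :
    (∀ h, W h → P h) ↔ ∀ h, W h → ∀ k : ℕ, P (g⁻¹ ^ k * h) :=
  ⟨fun H h hh k => H _ (hW h hh k), fun H h hh => by simpa using H h hh 0⟩

section AdditiveCharacter

variable {G : Type*} [Group G] {u : G → ℝ}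

theorem map_inv_pow_mul_of_map_mul (hu : ∀ a b : G, u (a * b) = u a + u b) (g h : G) (k : ℕ) :
    u (g⁻¹ ^ k * h) = u h - k * u g := by
  have hinv : u g⁻¹ = -u g := by
    have h1 := hu 1 1
    have h2 := hu g⁻¹ g
    simp only [mul_one, inv_mul_cancel] at h1 h2
    linarith
  induction k with
  | zero => simp
  | succ k ih => rw [pow_succ', mul_assoc, hu, ih, hinv]; push_cast; ring

theorem not_isOfFinOrder_of_map_neg (hu : ∀ a b : G, u (a * b) = u a + u b) {g : G}
    (hg : u g < 0) : ¬IsOfFinOrder g := by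
  rw [isOfFinOrder_iff_pow_eq_one]
  rintro ⟨n, hn, hgn⟩
  have := map_inv_pow_mul_of_map_mul hu g 1 n
  simp only [inv_pow, hgn, inv_one, mul_one] at this
  have : (0 : ℝ) < n := by exact_mod_cast hn
  nlinarith

theorem exists_forall_ge_map_inv_pow_mul_pos (hu : ∀ a b : G, u (a * b) = u a + u b) {g : G}
    (hg : u g < 0) (h : G) : ∃ N : ℕ, ∀ n ≥ N, 0 < u (g⁻¹ ^ n * h) := by
  obtain ⟨N, hN⟩ := exists_nat_gt (u h / u g)
  refine ⟨N, fun n hn => ?_⟩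
  have hn' : (N : ℝ) ≤ n := by exact_mod_cast hn
  rw [map_inv_pow_mul_of_map_mul hu, div_lt_iff_of_neg hg] at *
  nlinarith

end AdditiveCharacter

theorem L_equality_unit_equivalence_general {G : Type*} [Group G] (u : G → ℝ)
    (hu : ∀ a b : G, u (a * b) = u a + u b) (g : G) (hg : u g < 0)
    (L : ℝ) (lam mu : G → ℤ)
    (hlam0 : ∀ h : G, lam h ≠ 0 → u h ≤ 0)
    (hmu0 : ∀ h : G, mu h ≠ 0 → u h ≤ 0) :
    trunc u L (lam - conv (geom g) mu) = 0 ↔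
      trunc u L (conv (delta (1 : G) - delta g) lam - mu) = 0 := by
  have hwindow : ∀ h, -L < u h → ∀ k : ℕ, -L < u (g⁻¹ ^ k * h) := fun h hh k => by
    rw [map_inv_pow_mul_of_map_mul hu]
    nlinarith [(Nat.cast_nonneg k : (0 : ℝ) ≤ k)]
  simp only [trunc_eq_zero_iff, Pi.sub_apply, sub_eq_zero]
  refine (forall_iff_forall_inv_pow_mul hwindow).trans <|
    (forall₂_congr fun h _ => ?_).trans (forall_iff_forall_inv_pow_mul hwindow).symm
  obtain ⟨N, hN⟩ := exists_forall_ge_map_inv_pow_mul_pos hu hg h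
  exact eq_conv_geom_on_orbit_iff (not_isOfFinOrder_of_map_neg hu hg)
    (fun n hn => by_contra fun h0 => (hN n hn).not_ge (hlam0 _ h0))
    (fun n hn => by_contra fun h0 => (hN n hn).not_ge (hmu0 _ h0))

/-- For series supported in the nonpositive part, the `L`-equality
`λ ≡_L (1 + g + g² + ⋯)·μ` holds if and only if `(1 - g)·λ ≡_L μ` holds. -/
theorem L_equality_unit_equivalence {G : Type*} [Group G] (u : G → ℝ)
    (hu : ∀ a b : G, u (a * b) = u a + u b) (g : G) (hg : u g < 0)
    (L : ℝ) (hL : 0 < L) (lam mu : G → ℤ)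
    (hlam : NovCond u lam) (hmu : NovCond u mu)
    (hlam0 : ∀ h : G, lam h ≠ 0 → u h ≤ 0)
    (hmu0 : ∀ h : G, mu h ≠ 0 → u h ≤ 0) :
    trunc u L (lam - conv (geom g) mu) = 0 ↔
      trunc u L (conv (delta (1 : G) - delta g) lam - mu) = 0 :=
  L_equality_unit_equivalence_general u hu g hg L lam mu hlam0 hmu0
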